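/- arXiv:2603.12947 — 2 statements merged into one kernel-verified Lean document; each statement's English description precedes it below -/
import Mathlib

section
/- Let T_∞ be the countably branching tree (finite sequences of natural numbers) and X_{T_∞} the Banach space generated by chains of T_∞. For every f ∈ X_{T_∞}* and every ε > 0, there exists a finitely branching subtree T_0 ⊆ T_∞ such that ‖P*_{T_∞ \ T_0} f‖ < ε, where P_{T_∞ \ T_0} is the canonical basis projection onto the closed span of {e_s : s ∈ T_∞ \ T_0}. -/
open Metric Filter Topology

/-- Nodes of the countably branching tree `T_∞`: finite sequences of natural numbers. -/
abbrev NodeInf := List ℕ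

/-- A finite set of nodes is a chain if its elements are pairwise comparable for the
initial-segment (prefix) order. -/
def IsFinChainInf (A : Finset NodeInf) : Prop := ∀ s ∈ A, ∀ t ∈ A, s <+: t ∨ t <+: s

/-- The tree norm of a finitely supported function on `T_∞`: the supremum over chains `A`
of `∑_{t ∈ A} |c t|`. -/
noncomputable def treeNormInf (c : NodeInf →₀ ℝ) : ℝ :=
  sSup {r | ∃ A : Finset NodeInf, IsFinChainInf A ∧ r = ∑ t ∈ A, |c t|}

lemma treeSet_bddAbove (c : NodeInf →₀ ℝ) :
    BddAbove {r | ∃ A : Finset NodeInf, IsFinChainInf A ∧ r = ∑ t ∈ A, |c t|} := by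
  classical
  refine ⟨∑ t ∈ c.support, |c t|, ?_⟩
  rintro r ⟨A, hA, rfl⟩
  calc ∑ t ∈ A, |c t| = ∑ t ∈ A.filter (fun t => c t ≠ 0), |c t| := by
        refine (Finset.sum_filter_of_ne ?_).symm
        intro t ht h h0
        exact h (by rw [h0, abs_zero])
    _ ≤ ∑ t ∈ c.support, |c t| := by
        apply Finset.sum_le_sum_of_subset_of_nonneg
        · intro t ht
          simp only [Finset.mem_filter] at ht
          exact Finsupp.mem_support_iff.2 ht.2
        · intro t _ _; exact abs_nonneg _

lemma chain_sum_le_treeNormInf (c : NodeInf →₀ ℝ) {A : Finset NodeInf} (hA : IsFinChainInf A) :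
    ∑ t ∈ A, |c t| ≤ treeNormInf c :=
  le_csSup (treeSet_bddAbove c) ⟨A, hA, rfl⟩

lemma treeNormInf_nonneg (c : NodeInf →₀ ℝ) : 0 ≤ treeNormInf c := by
  have := chain_sum_le_treeNormInf c (A := ∅) (by intro s hs; simp at hs)
  simpa using this

lemma treeNormInf_le (c : NodeInf →₀ ℝ) {M : ℝ} (h0 : 0 ≤ M)
    (h : ∀ A : Finset NodeInf, IsFinChainInf A → ∑ t ∈ A, |c t| ≤ M) : treeNormInf c ≤ M :=
  Real.sSup_le (by rintro r ⟨A, hA, rfl⟩; exact h A hA) h0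

lemma treeNormInf_mono {d c : NodeInf →₀ ℝ} (h : ∀ t, |d t| ≤ |c t|) :
    treeNormInf d ≤ treeNormInf c :=
  treeNormInf_le d (treeNormInf_nonneg c) fun A hA =>
    le_trans (Finset.sum_le_sum fun t _ => h t) (chain_sum_le_treeNormInf c hA)

set_option maxHeartbeats 1000000 in
/-- **Functionals on `X_{T_∞}` are essentially supported on a finitely branching subtree.**
Let `X` be the countably branching tree space (a Banach space with a family `(e_t)_{t ∈ T_∞}`
with dense finitely supported span carrying the tree norm), and let `P S` denote the canonical
basis projection onto the closed span of `{e_s : s ∈ S}`. Then for every `f ∈ X^*` and every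
`ε > 0` there is a prefix-closed, finitely branching subtree `T₀ ⊆ T_∞` such that
`‖P*_{T_∞ \ T₀} f‖ = ‖f ∘ P (T₀ᶜ)‖ < ε`. -/
theorem countably_branching_functional_on_finitely_branching_subtree
    {X : Type*} [NormedAddCommGroup X] [NormedSpace ℝ X] [CompleteSpace X]
    (e : NodeInf → X)
    (hnorm : ∀ c : NodeInf →₀ ℝ, ‖c.sum fun t a => a • e t‖ = treeNormInf c)
    (hdense : DenseRange fun c : NodeInf →₀ ℝ => c.sum fun t a => a • e t)
    (P : Set NodeInf → X →L[ℝ] X)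
    (hPmem : ∀ (S : Set NodeInf) (t : NodeInf), t ∈ S → P S (e t) = e t)
    (hPnot : ∀ (S : Set NodeInf) (t : NodeInf), t ∉ S → P S (e t) = 0)
    (hPnorm : ∀ S : Set NodeInf, ‖P S‖ ≤ 1)
    (f : X →L[ℝ] ℝ) (ε : ℝ) (hε : 0 < ε) :
    ∃ T₀ : Set NodeInf,
      (∀ s t : NodeInf, s <+: t → t ∈ T₀ → s ∈ T₀) ∧
      (∀ s ∈ T₀, {n : ℕ | s ++ [n] ∈ T₀}.Finite) ∧
      ‖f.comp (P T₀ᶜ)‖ < ε := by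
  classical
  haveI instDP : ∀ (S : Set NodeInf), DecidablePred (· ∈ S) := fun _ => Classical.decPred _
  set L : (NodeInf →₀ ℝ) →ₗ[ℝ] X := Finsupp.linearCombination ℝ e with hLdef
  have hLa : ∀ c : NodeInf →₀ ℝ, L c = c.sum fun t a => a • e t := fun c =>
    Finsupp.linearCombination_apply ℝ c
  have hnorm' : ∀ c, ‖L c‖ = treeNormInf c := fun c => by rw [hLa]; exact hnorm c
  have hdense' : DenseRange fun c : NodeInf →₀ ℝ => L c := by
    simpa only [hLa] using hdense
  set V : NodeInf → Set NodeInf := fun s => {t | s <+: t} with hVdef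
  set ns : NodeInf → ℝ := fun s => ‖f.comp (P (V s))‖ with hnsdef
  have hns0 : ∀ s, 0 ≤ ns s := fun s => norm_nonneg _
  -- `P` acts as a filter on finitely supported vectors
  have hPfilter : ∀ (S : Set NodeInf) (c : NodeInf →₀ ℝ),
      P S (L c) = L (c.filter (· ∈ S)) := by
    intro S c
    induction c using Finsupp.induction_linear with
    | zero => simp [Finsupp.filter_zero]
    | add a b ha hb => rw [Finsupp.filter_add, map_add, map_add, ha, hb, map_add]
    | single a b =>
      rw [Finsupp.linearCombination_single, map_smul]
      by_cases h : a ∈ S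
      · rw [hPmem S a h, Finsupp.filter_single_of_pos _ h,
          Finsupp.linearCombination_single]
      · rw [hPnot S a h, Finsupp.filter_single_of_neg _ h, smul_zero, map_zero]
  -- norm bound for sums supported on pairwise incomparable subtrees
  have normB : ∀ F : Finset NodeInf,
      (∀ s ∈ F, ∀ t ∈ F, s ≠ t → ¬(s <+: t ∨ t <+: s)) →
      ∀ c : NodeInf → (NodeInf →₀ ℝ),
      (∀ s ∈ F, ∀ t, c s t ≠ 0 → s <+: t) → (∀ s ∈ F, treeNormInf (c s) ≤ 1) →
      treeNormInf (∑ s ∈ F, c s) ≤ 1 := by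
    intro F hF c hsupp hle
    refine treeNormInf_le _ zero_le_one ?_
    intro A hA
    by_cases hz : ∀ t ∈ A, (∑ s ∈ F, c s) t = 0
    · calc ∑ t ∈ A, |(∑ s ∈ F, c s) t| = ∑ t ∈ A, (0:ℝ) :=
            Finset.sum_congr rfl fun t ht => by rw [hz t ht, abs_zero]
        _ ≤ 1 := by simp
    · push_neg at hz
      obtain ⟨t₀, ht₀A, ht₀⟩ := hz
      have hex : ∃ s₀ ∈ F, c s₀ t₀ ≠ 0 := by
        by_contra h
        push_neg at h
        exact ht₀ (by rw [Finsupp.finset_sum_apply]; exact Finset.sum_eq_zero h)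
      obtain ⟨s₀, hs₀F, hs₀⟩ := hex
      have key : ∀ t ∈ A, ∀ s ∈ F, s ≠ s₀ → c s t = 0 := by
        intro t htA s hsF hne
        by_contra hcs
        have h1 : s <+: t := hsupp s hsF t hcs
        have h2 : s₀ <+: t₀ := hsupp s₀ hs₀F t₀ hs₀
        have hcomp := hA t htA t₀ ht₀A
        refine hF s hsF s₀ hs₀F hne ?_
        rcases hcomp with h | h
        · exact List.prefix_or_prefix_of_prefix (h1.trans h) h2
        · exact List.prefix_or_prefix_of_prefix h1 (h2.trans h)
      calc ∑ t ∈ A, |(∑ s ∈ F, c s) t| = ∑ t ∈ A, |c s₀ t| := by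
            refine Finset.sum_congr rfl fun t ht => ?_
            rw [Finsupp.finset_sum_apply]
            rw [Finset.sum_eq_single_of_mem s₀ hs₀F fun s hs hne => key t ht s hs hne]
        _ ≤ treeNormInf (c s₀) := chain_sum_le_treeNormInf _ hA
        _ ≤ 1 := hle s₀ hs₀F
  -- Lemma A : for pairwise incomparable nodes, `∑ ns ≤ ‖f‖`
  have lemA : ∀ F : Finset NodeInf,
      (∀ s ∈ F, ∀ t ∈ F, s ≠ t → ¬(s <+: t ∨ t <+: s)) → ∑ s ∈ F, ns s ≤ ‖f‖ := by
    intro F hF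
    refine le_of_forall_pos_le_add ?_
    intro η hη
    set η' : ℝ := η / (F.card + 1) with hη'def
    have hη' : 0 < η' := by positivity
    have hchoose : ∀ s : NodeInf, ∃ d : NodeInf →₀ ℝ,
        (∀ t, d t ≠ 0 → s <+: t) ∧ treeNormInf d ≤ 1 ∧ ns s - η' < f (L d) := by
      intro s
      set g := f.comp (P (V s)) with hg
      have hgfle : ‖g‖ ≤ ‖f‖ := by
        calc ‖g‖ ≤ ‖f‖ * ‖P (V s)‖ := ContinuousLinearMap.opNorm_comp_le _ _
          _ ≤ ‖f‖ * 1 := mul_le_mul_of_nonneg_left (hPnorm _) (norm_nonneg f)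
          _ = ‖f‖ := mul_one _
      have hnsg : ns s = ‖g‖ := by simp only [hnsdef, hg]
      have hr : ns s - η' < ‖g‖ := by rw [← hnsg]; linarith
      obtain ⟨x, hx1, hx2⟩ := g.exists_lt_apply_of_lt_opNorm hr
      set β : ℝ := min (1 - ‖x‖) ((‖g x‖ - (ns s - η')) / (‖f‖ + 1)) with hβdef
      have hβ1 : β ≤ 1 - ‖x‖ := min_le_left _ _
      have hβ2 : β ≤ (‖g x‖ - (ns s - η')) / (‖f‖ + 1) := min_le_right _ _
      have hβpos : 0 < β := lt_min (by linarith) (div_pos (by linarith) (by positivity))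
      obtain ⟨c, hc⟩ := hdense'.exists_dist_lt x hβpos
      have hcx : ‖L c - x‖ < β := by rwa [dist_comm, dist_eq_norm] at hc
      have hLc1 : ‖L c‖ ≤ 1 := by
        have h1 : L c = x + (L c - x) := by abel
        calc ‖L c‖ = ‖x + (L c - x)‖ := by rw [← h1]
          _ ≤ ‖x‖ + ‖L c - x‖ := norm_add_le _ _
          _ ≤ 1 := by linarith
      have hd : |g (L c) - g x| < ‖g x‖ - (ns s - η') := by
        have e1 : g (L c) - g x = g (L c - x) := (map_sub g _ _).symm
        have hstep : ‖f‖ * ((‖g x‖ - (ns s - η')) / (‖f‖ + 1)) < ‖g x‖ - (ns s - η') := by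
          rw [mul_comm, div_mul_eq_mul_div, div_lt_iff₀ (by positivity)]
          nlinarith [norm_nonneg f]
        calc |g (L c) - g x| = ‖g (L c - x)‖ := by rw [e1]; exact (Real.norm_eq_abs _).symm
          _ ≤ ‖g‖ * ‖L c - x‖ := g.le_opNorm _
          _ ≤ ‖f‖ * ‖L c - x‖ := mul_le_mul_of_nonneg_right hgfle (norm_nonneg _)
          _ ≤ ‖f‖ * β := mul_le_mul_of_nonneg_left hcx.le (norm_nonneg f)
          _ ≤ ‖f‖ * ((‖g x‖ - (ns s - η')) / (‖f‖ + 1)) :=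
              mul_le_mul_of_nonneg_left hβ2 (norm_nonneg f)
          _ < _ := hstep
      have hgc : ns s - η' < |g (L c)| := by
        have habs : |g x| - |g (L c)| ≤ |g (L c) - g x| := by
          rw [abs_sub_comm]; exact abs_sub_abs_le_abs_sub _ _
        have hnx : ‖g x‖ = |g x| := Real.norm_eq_abs _
        linarith
      set d₀ : NodeInf →₀ ℝ := c.filter (· ∈ V s) with hd₀def
      have hgLc : g (L c) = f (L d₀) := by
        rw [hg, ContinuousLinearMap.comp_apply, hPfilter, hd₀def]
      have hsupp₀ : ∀ t, d₀ t ≠ 0 → s <+: t := by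
        intro t ht
        by_contra h
        exact ht (by rw [hd₀def, Finsupp.filter_apply, if_neg (show ¬ (t ∈ V s) from h)])
      have hnorm₀ : treeNormInf d₀ ≤ 1 := by
        refine le_trans (treeNormInf_mono ?_) (le_trans (le_of_eq (hnorm' c).symm) hLc1)
        intro t
        rw [hd₀def, Finsupp.filter_apply]
        split
        · exact le_rfl
        · simp [abs_nonneg]
      rcases le_or_gt 0 (f (L d₀)) with hpos | hneg
      · exact ⟨d₀, hsupp₀, hnorm₀, by rwa [hgLc, abs_of_nonneg hpos] at hgc⟩
      · refine ⟨-d₀, ?_, ?_, ?_⟩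
        · intro t ht
          exact hsupp₀ t (by simpa using ht)
        · refine le_trans (treeNormInf_mono ?_) hnorm₀
          intro t
          simp
        · rw [map_neg, map_neg]
          rw [hgLc, abs_of_neg hneg] at hgc
          linarith
    choose d hd1 hd2 hd3 using hchoose
    set D : NodeInf →₀ ℝ := ∑ s ∈ F, d s with hDdef
    have hDnorm : treeNormInf D ≤ 1 :=
      normB F hF d (fun s _ t ht => hd1 s t ht) (fun s _ => hd2 s)
    have hfD : ∑ s ∈ F, ns s - F.card * η' ≤ f (L D) := by
      have h1 : f (L D) = ∑ s ∈ F, f (L (d s)) := by rw [hDdef, map_sum, map_sum]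
      have h2 : ∑ s ∈ F, (ns s - η') ≤ ∑ s ∈ F, f (L (d s)) :=
        Finset.sum_le_sum fun s _ => (hd3 s).le
      rw [Finset.sum_sub_distrib, Finset.sum_const, nsmul_eq_mul] at h2
      rw [h1]
      linarith
    have hfD2 : f (L D) ≤ ‖f‖ := by
      calc f (L D) ≤ |f (L D)| := le_abs_self _
        _ ≤ ‖f‖ * ‖L D‖ := by rw [← Real.norm_eq_abs]; exact f.le_opNorm _
        _ ≤ ‖f‖ * 1 := mul_le_mul_of_nonneg_left (by rw [hnorm']; exact hDnorm) (norm_nonneg f)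
        _ = ‖f‖ := mul_one _
    have hcard : (F.card : ℝ) * η' ≤ η := by
      simp only [hη'def]
      rw [mul_div_assoc', div_le_iff₀ (by positivity)]
      nlinarith [hη.le, Nat.cast_nonneg (α := ℝ) F.card]
    linarith
  -- summability of the norms over the children of any node
  have hchild : ∀ q : NodeInf, Summable fun n : ℕ => ns (q ++ [n]) := by
    intro q
    apply summable_of_sum_le (c := ‖f‖) (fun n => hns0 _)
    intro u
    have hinj : ∀ x ∈ u, ∀ y ∈ u, q ++ [x] = q ++ [y] → x = y := by
      intro x _ y _ h
      have := List.append_cancel_left h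
      simpa using this
    have himg : ∑ s ∈ u.image (fun n => q ++ [n]), ns s = ∑ n ∈ u, ns (q ++ [n]) := by
      rw [Finset.sum_image hinj]
    rw [← himg]
    apply lemA
    intro s hs t ht hne
    simp only [Finset.mem_image] at hs ht
    obtain ⟨n, _, rfl⟩ := hs
    obtain ⟨m, _, rfl⟩ := ht
    rintro (h | h)
    · exact hne (h.eq_of_length (by simp))
    · exact hne (h.eq_of_length (by simp)).symm
  -- budgets
  set δ : NodeInf → ℝ := fun q => ε / 2 * (2⁻¹ : ℝ) ^ (Encodable.encode q + 1) with hδdef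
  have hδpos : ∀ q, 0 < δ q := fun q => by simp only [hδdef]; positivity
  have hR : ∀ q : NodeInf, ∃ R : Finset ℕ,
      ∀ u : Finset ℕ, Disjoint u R → ∑ n ∈ u, ns (q ++ [n]) ≤ δ q := by
    intro q
    obtain ⟨R, hRv⟩ := (summable_iff_vanishing.1 (hchild q)) (Metric.ball 0 (δ q))
      (Metric.ball_mem_nhds 0 (hδpos q))
    refine ⟨R, fun u hu => ?_⟩
    have := hRv u hu
    rw [Metric.mem_ball, Real.dist_eq, sub_zero] at this
    exact (le_abs_self _).trans this.le
  choose R hRs using hR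
  -- the subtree
  set T₀ : Set NodeInf := {l | ∀ p n, p ++ [n] <+: l → n ∈ R p} with hT₀def
  have hclosed : ∀ s t : NodeInf, s <+: t → t ∈ T₀ → s ∈ T₀ :=
    fun s t hst ht p n hpn => ht p n (hpn.trans hst)
  have hbranch : ∀ s ∈ T₀, {n : ℕ | s ++ [n] ∈ T₀}.Finite := by
    intro s _
    apply Set.Finite.subset (R s).finite_toSet
    intro n hn
    exact hn s n (List.prefix_refl _)
  -- the boundary
  set B : Set NodeInf := {t | ∃ p n, t = p ++ [n] ∧ p ∈ T₀ ∧ n ∉ R p} with hBdef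
  have hBnotT : ∀ t ∈ B, t ∉ T₀ := by
    rintro t ⟨p, n, rfl, hp, hn⟩ ht
    exact hn (ht p n (List.prefix_refl _))
  have hBincomp : ∀ t ∈ B, ∀ t' ∈ B, t <+: t' → t = t' := by
    rintro t htB t' ⟨p', n', rfl, hp', hn'⟩ hpre
    rcases List.prefix_concat_iff.1 hpre with h | h
    · exact h
    · exact absurd (hclosed t p' h hp') (hBnotT t htB)
  have hcover : ∀ m : ℕ, ∀ u : NodeInf, u.length ≤ m → u ∉ T₀ → ∃ t ∈ B, t <+: u := by
    intro m
    induction m with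
    | zero =>
      intro u hlen hu
      exfalso
      apply hu
      show ∀ p n, p ++ [n] <+: u → n ∈ R p
      intro p n hpn
      exfalso
      have := hpn.length_le
      simp only [List.length_append, List.length_cons, List.length_nil] at this
      omega
    | succ m ih =>
      intro u hlen hu
      have hu' : ¬ ∀ p n, p ++ [n] <+: u → n ∈ R p := hu
      push_neg at hu'
      obtain ⟨p, n, hpre, hnR⟩ := hu'
      by_cases hp : p ∈ T₀
      · exact ⟨p ++ [n], ⟨p, n, rfl, hp, hnR⟩, hpre⟩
      · have hlp : p.length ≤ m := by
          have := hpre.length_le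
          simp only [List.length_append, List.length_cons, List.length_nil] at this
          omega
        obtain ⟨t, htB, htp⟩ := ih p hlp hp
        exact ⟨t, htB, htp.trans ((List.prefix_append p [n]).trans hpre)⟩
  -- finite subsets of the boundary have small total mass
  have hBsum : ∀ Bf : Finset NodeInf, (↑Bf ⊆ B) → ∑ t ∈ Bf, ns t ≤ ε / 2 := by
    intro Bf hBf
    have hrepr : ∀ t ∈ Bf, t.dropLast ++ [t.getLastD 0] = t ∧ t.getLastD 0 ∉ R t.dropLast := by
      intro t ht
      obtain ⟨p, n, rfl, hp, hn⟩ := hBf ht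
      rw [List.dropLast_concat, List.getLastD_concat]
      exact ⟨rfl, hn⟩
    set Q : Finset NodeInf := Bf.image List.dropLast with hQdef
    have hmaps : ∀ t ∈ Bf, t.dropLast ∈ Q := fun t ht => Finset.mem_image_of_mem _ ht
    rw [← Finset.sum_fiberwise_of_maps_to hmaps]
    have hfiber : ∀ q ∈ Q, ∑ t ∈ Bf.filter (fun t => t.dropLast = q), ns t ≤ δ q := by
      intro q _
      set Ff := Bf.filter (fun t => t.dropLast = q) with hFfdef
      have hFfmem : ∀ t ∈ Ff, t ∈ Bf ∧ t.dropLast = q := by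
        intro t ht; rw [hFfdef, Finset.mem_filter] at ht; exact ht
      have hinj : ∀ x ∈ Ff, ∀ y ∈ Ff, x.getLastD 0 = y.getLastD 0 → x = y := by
        intro x hx y hy hxy
        obtain ⟨hx1, hx2⟩ := hFfmem x hx
        obtain ⟨hy1, hy2⟩ := hFfmem y hy
        rw [← (hrepr x hx1).1, ← (hrepr y hy1).1, hx2, hy2, hxy]
      have hsum : ∑ n ∈ Ff.image (fun t => t.getLastD 0), ns (q ++ [n]) = ∑ t ∈ Ff, ns t := by
        rw [Finset.sum_image hinj]
        refine Finset.sum_congr rfl fun t ht => ?_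
        obtain ⟨ht1, ht2⟩ := hFfmem t ht
        rw [← ht2, (hrepr t ht1).1]
      rw [← hsum]
      apply hRs q
      rw [Finset.disjoint_left]
      intro n hn hnR
      simp only [Finset.mem_image] at hn
      obtain ⟨t, ht, rfl⟩ := hn
      obtain ⟨ht1, ht2⟩ := hFfmem t ht
      exact (hrepr t ht1).2 (ht2 ▸ hnR)
    have hQbound : ∑ q ∈ Q, δ q ≤ ε / 2 := by
      have hinj : ∀ x ∈ Q, ∀ y ∈ Q, Encodable.encode x = Encodable.encode y → x = y :=
        fun x _ y _ h => Encodable.encode_injective h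
      have hsummable : Summable fun k : ℕ => (2⁻¹ : ℝ) ^ (k + 1) := by
        simp only [pow_succ]
        exact (summable_geometric_of_lt_one (by norm_num) (by norm_num)).mul_right _
      have h3 : ∑' k : ℕ, (2⁻¹ : ℝ) ^ (k + 1) = 1 := by
        simp only [pow_succ]
        rw [tsum_mul_right, tsum_geometric_of_lt_one (by norm_num) (by norm_num)]
        norm_num
      have h2 : ∑ k ∈ Q.image Encodable.encode, (2⁻¹ : ℝ) ^ (k + 1)
          ≤ ∑' k : ℕ, (2⁻¹ : ℝ) ^ (k + 1) :=
        Summable.sum_le_tsum _ (fun k _ => by positivity) hsummable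
      have h1 : ∑ q ∈ Q, δ q
          = ε / 2 * ∑ k ∈ Q.image Encodable.encode, (2⁻¹ : ℝ) ^ (k + 1) := by
        simp only [hδdef]
        rw [← Finset.mul_sum]
        congr 1
        exact (Finset.sum_image (f := fun k => (2⁻¹ : ℝ) ^ (k + 1)) hinj).symm
      rw [h1]
      calc ε / 2 * ∑ k ∈ Q.image Encodable.encode, (2⁻¹ : ℝ) ^ (k + 1)
          ≤ ε / 2 * 1 := by
            apply mul_le_mul_of_nonneg_left _ (by positivity)
            rw [← h3]
            exact h2
        _ = ε / 2 := mul_one _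
    exact le_trans (Finset.sum_le_sum hfiber) hQbound
  -- the key estimate on the dense subspace of finitely supported vectors
  have key : ∀ c : NodeInf →₀ ℝ, |f (P T₀ᶜ (L c))| ≤ ε / 2 * ‖L c‖ := by
    intro c
    set φ : NodeInf → NodeInf := fun u =>
      if h : ∃ t ∈ B, t <+: u then h.choose else [] with hφdef
    have hφ : ∀ u ∉ T₀, φ u ∈ B ∧ φ u <+: u := by
      intro u hu
      have h : ∃ t ∈ B, t <+: u := hcover u.length u le_rfl hu
      simp only [hφdef, dif_pos h]
      exact h.choose_spec
    set Bf : Finset NodeInf := (c.support.filter (· ∉ T₀)).image φ with hBfdef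
    have hBfB : (↑Bf : Set NodeInf) ⊆ B := by
      intro t ht
      simp only [hBfdef, Finset.coe_image, Set.mem_image, Finset.mem_coe,
        Finset.mem_filter] at ht
      obtain ⟨u, ⟨_, hu⟩, rfl⟩ := ht
      exact (hφ u hu).1
    have hdecomp : c.filter (· ∈ T₀ᶜ) = ∑ t ∈ Bf, c.filter (· ∈ V t) := by
      ext u
      rw [Finsupp.filter_apply, Finsupp.finset_sum_apply]
      by_cases huT : u ∈ T₀
      · rw [if_neg (by simpa using huT)]
        symm
        apply Finset.sum_eq_zero
        intro t htBf
        have hnot : ¬ (u ∈ V t) := fun hpre => hBnotT t (hBfB htBf) (hclosed t u hpre huT)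
        rw [Finsupp.filter_apply, if_neg hnot]
      · rw [if_pos (by simpa using huT)]
        by_cases hcu : c u = 0
        · rw [hcu]
          symm
          apply Finset.sum_eq_zero
          intro t _
          rw [Finsupp.filter_apply]
          split
          · exact hcu
          · rfl
        · have huS : u ∈ c.support.filter (· ∉ T₀) := by
            simp only [Finset.mem_filter, Finsupp.mem_support_iff]
            exact ⟨hcu, huT⟩
          have hφu := hφ u huT
          have hmain : (c.filter (· ∈ V (φ u))) u = c u := by
            rw [Finsupp.filter_apply, if_pos (show u ∈ V (φ u) from hφu.2)]
          symm
          refine Eq.trans (Finset.sum_eq_single_of_mem (φ u)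
            (Finset.mem_image_of_mem φ huS) ?_) hmain
          intro t htBf hne
          have hnot : ¬ (u ∈ V t) := by
            intro hpre
            have hpre' : t <+: u := hpre
            rcases List.prefix_or_prefix_of_prefix hpre' hφu.2 with h | h
            · exact hne (hBincomp t (hBfB htBf) (φ u) hφu.1 h)
            · exact hne (hBincomp (φ u) hφu.1 t (hBfB htBf) h).symm
          rw [Finsupp.filter_apply, if_neg hnot]
    have h1 : P T₀ᶜ (L c) = ∑ t ∈ Bf, P (V t) (L c) := by
      rw [hPfilter, hdecomp, map_sum]
      exact Finset.sum_congr rfl fun t _ => (hPfilter (V t) c).symm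
    rw [h1]
    calc |f (∑ t ∈ Bf, P (V t) (L c))| = |∑ t ∈ Bf, f (P (V t) (L c))| := by rw [map_sum]
      _ ≤ ∑ t ∈ Bf, |f (P (V t) (L c))| := Finset.abs_sum_le_sum_abs _ _
      _ ≤ ∑ t ∈ Bf, ns t * ‖L c‖ := by
          refine Finset.sum_le_sum fun t _ => ?_
          have heq : |f (P (V t) (L c))| = ‖(f.comp (P (V t))) (L c)‖ := by
            rw [ContinuousLinearMap.comp_apply, Real.norm_eq_abs]
          rw [heq]
          exact (f.comp (P (V t))).le_opNorm _
      _ = (∑ t ∈ Bf, ns t) * ‖L c‖ := (Finset.sum_mul _ _ _).symm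
      _ ≤ ε / 2 * ‖L c‖ := mul_le_mul_of_nonneg_right (hBsum Bf hBfB) (norm_nonneg _)
  -- conclusion by density
  refine ⟨T₀, hclosed, hbranch, ?_⟩
  have hop : ‖f.comp (P T₀ᶜ)‖ ≤ ε / 2 := by
    refine ContinuousLinearMap.opNorm_le_bound _ (by positivity) ?_
    intro x
    have hcl : IsClosed {y : X | ‖(f.comp (P T₀ᶜ)) y‖ ≤ ε / 2 * ‖y‖} :=
      isClosed_le ((f.comp (P T₀ᶜ)).continuous.norm) (continuous_const.mul continuous_norm)
    refine hdense'.induction_on x hcl ?_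
    intro c
    show ‖(f.comp (P T₀ᶜ)) (L c)‖ ≤ ε / 2 * ‖L c‖
    rw [ContinuousLinearMap.comp_apply, Real.norm_eq_abs]
    exact key c
  linarith
end

section
/- Let 𝒜 be an adequate family of subsets of ℕ containing a two-element set {m, n}, and let h_{𝒜,1} be the Banach space generated by 𝒜. Then the point x = (e_m + e_n)/2 is not a super alternative Daugavet point: setting y = (e_m - e_n)/2, for every net (y_α) in the unit ball converging weakly to y, we have limsup_α max_{θ∈{-1,1}} ‖x + θ y_α‖ < 2; in particular limsup_α max_{θ∈{-1,1}} ‖x + θ y_α‖ ≤ max{3/2, √2}. -/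
/-!
Let `g_k` be the coordinate functionals, which are continuous because `|c_k| ≤ ‖c‖` by the
singleton sets in `𝒜`. Since the norm only sees `|c_k|`, adding `½ e_n` to a vector whose
`n`-th coordinate is `< -¼` does not increase its norm, and by density this persists on the
open set `{g_n < -¼}`. A net converging weakly to `(e_m - e_n)/2` eventually has `g_n(y_α) < -¼`
and `g_m(y_α) > ¼`, so both `‖x + y_α‖` and `‖x - y_α‖` are eventually at most
`½ ‖e_m‖ + ‖y_α‖ ≤ 3/2`.
-/

open Metric Filter Topology

noncomputable def adequateNorm (𝒜 : Set (Set ℕ)) (c : ℕ →₀ ℝ) : ℝ :=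
  sSup {r | ∃ F : Finset ℕ, (↑F : Set ℕ) ∈ 𝒜 ∧ r = ∑ k ∈ F, |c k|}

namespace adequateNorm

variable {𝒜 : Set (Set ℕ)}

lemma bddAbove_sums (𝒜 : Set (Set ℕ)) (c : ℕ →₀ ℝ) :
    BddAbove {r | ∃ F : Finset ℕ, (↑F : Set ℕ) ∈ 𝒜 ∧ r = ∑ k ∈ F, |c k|} := by
  classical
  refine ⟨∑ k ∈ c.support, |c k|, ?_⟩
  rintro r ⟨F, -, rfl⟩
  calc ∑ k ∈ F, |c k| = ∑ k ∈ F ∩ c.support, |c k| :=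
        (Finset.sum_subset Finset.inter_subset_left fun k _ hk => by simp_all).symm
    _ ≤ ∑ k ∈ c.support, |c k| :=
        Finset.sum_le_sum_of_subset_of_nonneg Finset.inter_subset_right fun _ _ _ => abs_nonneg _

lemma sum_le (c : ℕ →₀ ℝ) {F : Finset ℕ} (hF : (↑F : Set ℕ) ∈ 𝒜) :
    ∑ k ∈ F, |c k| ≤ adequateNorm 𝒜 c :=
  le_csSup (bddAbove_sums 𝒜 c) ⟨F, hF, rfl⟩

lemma nonneg (𝒜 : Set (Set ℕ)) (c : ℕ →₀ ℝ) : 0 ≤ adequateNorm 𝒜 c :=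
  Real.sSup_nonneg fun _ ⟨_, _, hr⟩ => hr ▸ Finset.sum_nonneg fun _ _ => abs_nonneg _

lemma le_of_forall_sum_le {c : ℕ →₀ ℝ} {a : ℝ} (ha : 0 ≤ a)
    (h : ∀ F : Finset ℕ, (↑F : Set ℕ) ∈ 𝒜 → ∑ k ∈ F, |c k| ≤ a) : adequateNorm 𝒜 c ≤ a :=
  Real.sSup_le (fun _ ⟨F, hF, hr⟩ => hr ▸ h F hF) ha

lemma mono {c d : ℕ →₀ ℝ} (h : ∀ k, |d k| ≤ |c k|) : adequateNorm 𝒜 d ≤ adequateNorm 𝒜 c :=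
  le_of_forall_sum_le (nonneg 𝒜 c) fun _ hF =>
    (Finset.sum_le_sum fun k _ => h k).trans (sum_le c hF)

lemma abs_apply_le (hsingle : ∀ k : ℕ, ({k} : Set ℕ) ∈ 𝒜) (c : ℕ →₀ ℝ) (k : ℕ) :
    |c k| ≤ adequateNorm 𝒜 c := by
  simpa using sum_le c (F := {k}) (by simpa using hsingle k)

lemma single_one_le (k : ℕ) : adequateNorm 𝒜 (Finsupp.single k 1) ≤ 1 := by
  classical
  refine le_of_forall_sum_le zero_le_one fun F _ => ?_
  simp only [Finsupp.single_apply, apply_ite, abs_one, abs_zero, Finset.sum_ite_eq]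
  split_ifs <;> norm_num

end adequateNorm

lemma exists_continuous_comp_eq_of_abs_le_norm {V X : Type*} [AddCommGroup V] [Module ℝ V]
    [NormedAddCommGroup X] [NormedSpace ℝ X] (L : V →ₗ[ℝ] X) (φ : V →ₗ[ℝ] ℝ)
    (h : ∀ v, |φ v| ≤ ‖L v‖) : ∃ g : X →L[ℝ] ℝ, ∀ v, g (L v) = φ v := by
  have hker : LinearMap.ker L ≤ LinearMap.ker φ := fun v hv => by
    simpa [LinearMap.mem_ker.1 hv] using h v
  let ψ : LinearMap.range L →ₗ[ℝ] ℝ :=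
    (LinearMap.ker L).liftQ φ hker ∘ₗ L.quotKerEquivRange.symm.toLinearMap
  have hψ : ∀ v, ψ ⟨L v, LinearMap.mem_range_self L v⟩ = φ v := fun v => by simp [ψ]
  have hbound : ∀ z, ‖ψ z‖ ≤ 1 * ‖z‖ := by
    rintro ⟨_, v, rfl⟩
    simpa [hψ] using h v
  obtain ⟨g, hg, -⟩ := exists_extension_norm_eq _ (ψ.mkContinuous 1 hbound)
  exact ⟨g, fun v => (hg ⟨L v, LinearMap.mem_range_self L v⟩).trans (hψ v)⟩

section BasisSpace

variable {X : Type*} [NormedAddCommGroup X] [NormedSpace ℝ X] {𝒜 : Set (Set ℕ)} {e : ℕ → X}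

lemma exists_coordinate_functional (hsingle : ∀ k : ℕ, ({k} : Set ℕ) ∈ 𝒜)
    (hnorm : ∀ c : ℕ →₀ ℝ, ‖c.sum fun k a => a • e k‖ = adequateNorm 𝒜 c) (k : ℕ) :
    ∃ g : X →L[ℝ] ℝ, ∀ c, g (Finsupp.linearCombination ℝ e c) = c k :=
  exists_continuous_comp_eq_of_abs_le_norm _ (Finsupp.lapply k) fun c => by
    simpa [Finsupp.linearCombination_apply, hnorm] using adequateNorm.abs_apply_le hsingle c k

lemma norm_basis_le_one
    (hnorm : ∀ c : ℕ →₀ ℝ, ‖c.sum fun k a => a • e k‖ = adequateNorm 𝒜 c) (k : ℕ) :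
    ‖e k‖ ≤ 1 :=
  calc ‖e k‖ = ‖(Finsupp.single k (1 : ℝ)).sum fun i a => a • e i‖ := by
        simp [Finsupp.sum_single_index]
    _ = adequateNorm 𝒜 (Finsupp.single k 1) := hnorm _
    _ ≤ 1 := adequateNorm.single_one_le k

lemma norm_smul_add_le_of_apply_lt
    (hnorm : ∀ c : ℕ →₀ ℝ, ‖c.sum fun k a => a • e k‖ = adequateNorm 𝒜 c)
    (hdense : DenseRange fun c : ℕ →₀ ℝ => c.sum fun k a => a • e k)
    {n : ℕ} {g : X →L[ℝ] ℝ} (hg : ∀ c, g (Finsupp.linearCombination ℝ e c) = c n)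
    {t : ℝ} (ht : 0 ≤ t) {y : X} (hy : g y < -(t / 2)) : ‖t • e n + y‖ ≤ ‖y‖ := by
  classical
  have hfin : ∀ c : ℕ →₀ ℝ, c n < -(t / 2) →
      ‖t • e n + Finsupp.linearCombination ℝ e c‖ ≤ ‖Finsupp.linearCombination ℝ e c‖ := by
    intro c hc
    have hsum : t • e n + Finsupp.linearCombination ℝ e c =
        Finsupp.linearCombination ℝ e (Finsupp.single n t + c) := by simp
    rw [hsum]
    simp only [Finsupp.linearCombination_apply, hnorm]
    refine adequateNorm.mono fun k => ?_
    rcases eq_or_ne k n with rfl | hk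
    · simp only [Finsupp.add_apply, Finsupp.single_eq_same]
      rw [abs_of_neg (by linarith : c k < 0), abs_le]
      constructor <;> linarith
    · simp [Finsupp.single_eq_of_ne hk]
  have hclosed : IsClosed {y : X | ‖t • e n + y‖ ≤ ‖y‖} :=
    isClosed_le (by fun_prop) continuous_norm
  have hopen : IsOpen {y : X | g y < -(t / 2)} := isOpen_lt g.continuous continuous_const
  refine closure_minimal ?_ hclosed (hdense.open_subset_closure_inter hopen hy)
  rintro _ ⟨hlt, c, rfl⟩
  exact hfin c ((hg c).symm.trans_lt hlt)

lemma norm_half_add_le_three_halves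
    (hnorm : ∀ c : ℕ →₀ ℝ, ‖c.sum fun k a => a • e k‖ = adequateNorm 𝒜 c)
    (hdense : DenseRange fun c : ℕ →₀ ℝ => c.sum fun k a => a • e k)
    {m n : ℕ} {g : X →L[ℝ] ℝ} (hg : ∀ c, g (Finsupp.linearCombination ℝ e c) = c n)
    {y : X} (hy₁ : ‖y‖ ≤ 1) (hy : g y < -4⁻¹) : ‖(2 : ℝ)⁻¹ • (e m + e n) + y‖ ≤ 3 / 2 :=
  calc ‖(2 : ℝ)⁻¹ • (e m + e n) + y‖ = ‖(2 : ℝ)⁻¹ • e m + ((2 : ℝ)⁻¹ • e n + y)‖ := by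
        rw [smul_add, add_assoc]
    _ ≤ 2⁻¹ * ‖e m‖ + ‖y‖ := by
        grw [norm_add_le, norm_smul, Real.norm_of_nonneg (by norm_num),
          norm_smul_add_le_of_apply_lt hnorm hdense hg (by norm_num) (hy.trans_eq (by norm_num))]
    _ ≤ 2⁻¹ * 1 + 1 := by grw [norm_basis_le_one hnorm m, hy₁]
    _ = 3 / 2 := by norm_num

end BasisSpace

theorem adequate_family_not_super_ADP_point_general
    {X : Type*} [NormedAddCommGroup X] [NormedSpace ℝ X]
    (𝒜 : Set (Set ℕ))
    (hsingle : ∀ k : ℕ, ({k} : Set ℕ) ∈ 𝒜)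
    (e : ℕ → X)
    (hnorm : ∀ c : ℕ →₀ ℝ, ‖c.sum fun k a => a • e k‖ =
      sSup {r | ∃ F : Finset ℕ, (↑F : Set ℕ) ∈ 𝒜 ∧ r = ∑ k ∈ F, |c k|})
    (hdense : DenseRange fun c : ℕ →₀ ℝ => c.sum fun k a => a • e k)
    (m n : ℕ) (hmn : m ≠ n)
    {ι : Type*} (l : Filter ι) (hl : l.NeBot) (yα : ι → X)
    (hball : ∀ α, ‖yα α‖ ≤ 1)
    (hweak : ∀ g : X →L[ℝ] ℝ, Tendsto (fun α => g (yα α)) l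
      (𝓝 (g ((2 : ℝ)⁻¹ • (e m - e n))))) :
    limsup (fun α => max ‖(2 : ℝ)⁻¹ • (e m + e n) + yα α‖
        ‖(2 : ℝ)⁻¹ • (e m + e n) - yα α‖) l ≤ max (3 / 2) (Real.sqrt 2) ∧
    limsup (fun α => max ‖(2 : ℝ)⁻¹ • (e m + e n) + yα α‖
        ‖(2 : ℝ)⁻¹ • (e m + e n) - yα α‖) l < 2 := by
  obtain ⟨gm, hgm⟩ := exists_coordinate_functional hsingle hnorm m
  obtain ⟨gn, hgn⟩ := exists_coordinate_functional hsingle hnorm n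
  have hy : (2 : ℝ)⁻¹ • (e m - e n) =
      Finsupp.linearCombination ℝ e (Finsupp.single m 2⁻¹ - Finsupp.single n 2⁻¹) := by
    simp [smul_sub]
  have hm : Tendsto (fun α => gm (yα α)) l (𝓝 2⁻¹) := by
    convert hweak gm using 2
    rw [hy, hgm]
    simp [hmn]
  have hn : Tendsto (fun α => gn (yα α)) l (𝓝 (-2⁻¹)) := by
    convert hweak gn using 2
    rw [hy, hgn]
    simp [hmn]
  have hev : ∀ᶠ α in l, max ‖(2 : ℝ)⁻¹ • (e m + e n) + yα α‖
      ‖(2 : ℝ)⁻¹ • (e m + e n) - yα α‖ ≤ 3 / 2 := by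
    filter_upwards [hm.eventually (lt_mem_nhds (by norm_num : (4 : ℝ)⁻¹ < 2⁻¹)),
      hn.eventually (gt_mem_nhds (by norm_num : (-2⁻¹ : ℝ) < -4⁻¹))] with α hαm hαn
    refine max_le (norm_half_add_le_three_halves hnorm hdense hgn (hball α) hαn) ?_
    rw [sub_eq_add_neg, add_comm (e m)]
    exact norm_half_add_le_three_halves hnorm hdense hgm (by simpa using hball α)
      (by simpa using hαm)
  have hlimsup := limsup_le_of_le
    (isCoboundedUnder_le_of_le l fun _ => le_max_of_le_left (norm_nonneg _)) hev
  exact ⟨hlimsup.trans (le_max_left _ _), hlimsup.trans_lt (by norm_num)⟩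

/-- **Adequate-family spaces fail the super alternative Daugavet property at
`x = (e_m + e_n)/2`.** Let `𝒜` be an adequate family of subsets of `ℕ` (containing all
singletons, hereditary, and pointwise compact) containing a two-element set `{m, n}`, and let
`X = h_{𝒜,1}` be the associated Banach space: the completion of `c₀₀` under
`‖(a_k)‖ = sup_{A ∈ 𝒜} ∑_{k ∈ A} |a_k|`, with canonical basis `(e_k)`. Set
`x = (e_m + e_n)/2` and `y = (e_m - e_n)/2`. Then for every net `(y_α)` in the unit ball
converging weakly to `y`,
`limsup_α max_{θ ∈ {-1,1}} ‖x + θ y_α‖ ≤ max (3/2) (√2) < 2`;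
in particular `x` is not a super alternative Daugavet point. -/
theorem adequate_family_not_super_ADP_point
    {X : Type*} [NormedAddCommGroup X] [NormedSpace ℝ X] [CompleteSpace X]
    (𝒜 : Set (Set ℕ))
    (hsingle : ∀ k : ℕ, ({k} : Set ℕ) ∈ 𝒜)
    (hhered : ∀ A ∈ 𝒜, ∀ B ⊆ A, B ∈ 𝒜)
    (hcompact : ∀ A : Set ℕ, (∀ F : Finset ℕ, ↑F ⊆ A → (↑F : Set ℕ) ∈ 𝒜) → A ∈ 𝒜)
    (e : ℕ → X)
    (hnorm : ∀ c : ℕ →₀ ℝ, ‖c.sum fun k a => a • e k‖ =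
      sSup {r | ∃ F : Finset ℕ, (↑F : Set ℕ) ∈ 𝒜 ∧ r = ∑ k ∈ F, |c k|})
    (hdense : DenseRange fun c : ℕ →₀ ℝ => c.sum fun k a => a • e k)
    (m n : ℕ) (hmn : m ≠ n) (hmemA : ({m, n} : Set ℕ) ∈ 𝒜)
    {ι : Type*} (l : Filter ι) (hl : l.NeBot) (yα : ι → X)
    (hball : ∀ α, ‖yα α‖ ≤ 1)
    (hweak : ∀ g : X →L[ℝ] ℝ, Tendsto (fun α => g (yα α)) l
      (𝓝 (g ((2 : ℝ)⁻¹ • (e m - e n))))) :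
    limsup (fun α => max ‖(2 : ℝ)⁻¹ • (e m + e n) + yα α‖
        ‖(2 : ℝ)⁻¹ • (e m + e n) - yα α‖) l ≤ max (3 / 2) (Real.sqrt 2) ∧
    limsup (fun α => max ‖(2 : ℝ)⁻¹ • (e m + e n) + yα α‖
        ‖(2 : ℝ)⁻¹ • (e m + e n) - yα α‖) l < 2 :=
  adequate_family_not_super_ADP_point_general 𝒜 hsingle e hnorm hdense m n hmn l hl yα hball hweak
end
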